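/- Let ξ ∈ 𝕌ⁿ and g ∈ ℂ, and suppose a > 0 satisfies |⟨ν−2ξ,ν⟩| ≥ a·⟨ν,ρ⟩² for all ν > 0, and c > 0 satisfies |a_α| ≤ c for all α ∈ S. Then, with A = 1 + cn/a, the Harish-Chandra coefficients satisfy |a_ν(ξ;g)| ≤ A^{⟨ν,ρ⟩}/(⟨ν,ρ⟩!) for every ν ∈ ℤⁿ with ν ≥ 0. -/
import Mathlib


open scoped BigOperators
open Finset Filter Topology

noncomputable section

namespace TodaBC

variable {n : ℕ}

/-- The bilinear pairing `⟨ξ,x⟩ = ∑_j ξ_j x_j` on `ℂⁿ`. -/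
def pc (ξ x : Fin n → ℂ) : ℂ := ∑ j, ξ j * x j

/-- Complexification of an integer vector. -/
def zc (ν : Fin n → ℤ) : Fin n → ℂ := fun j => (ν j : ℂ)

/-- Complexification of a real vector. -/
def cr (x : Fin n → ℝ) : Fin n → ℂ := fun j => (x j : ℂ)

/-- `ρ = (n, n-1, …, 1)` as a complex vector (0-indexed: `ρ_j = n - j`). -/
def rhoC (n : ℕ) : Fin n → ℂ := fun j => ((n - (j : ℕ) : ℕ) : ℂ)

/-- `ρ = (n, n-1, …, 1)` as a real vector. -/
def rhoR (n : ℕ) : Fin n → ℝ := fun j => ((n - (j : ℕ) : ℕ) : ℝ)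

/-- `⟨ν,ρ⟩` for an integer vector `ν`. -/
def rp (ν : Fin n → ℤ) : ℤ := ∑ j, ν j * ((n : ℤ) - ((j : ℕ) : ℤ))

/-- `ν ≥ 0` : all initial partial sums of `ν` are nonnegative. -/
def dominant (ν : Fin n → ℤ) : Prop := ∀ k : Fin n, 0 ≤ ∑ j ∈ Finset.Iic k, ν j

/-- The domain `𝕌ⁿ = {ξ ∈ ℂⁿ ∣ ⟨ν-2ξ,ν⟩ ≠ 0 for all ν > 0}`. -/
def Uset (n : ℕ) : Set (Fin n → ℂ) :=
  {ξ | ∀ ν : Fin n → ℤ, dominant ν → ν ≠ 0 → pc (zc ν - 2 • ξ) (zc ν) ≠ 0}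

/-- Standard basis vector of `ℤⁿ` with (0-based) index `k`. -/
def eZ (n : ℕ) (k : ℕ) : Fin n → ℤ := fun i => if (i : ℕ) = k then 1 else 0

/-- RHS of the Toda Harish-Chandra recurrence: `∑_{α ∈ S} a_α a_{ν-α}`. -/
def todaRHS (g : ℂ) (a : (Fin n → ℤ) → ℂ) (ν : Fin n → ℤ) : ℂ :=
  (∑ k ∈ Finset.range (n - 1), 2 * a (ν - (eZ n k - eZ n (k + 1))))
    + g * a (ν - eZ n (n - 1)) + (1 / 4) * a (ν - 2 • eZ n (n - 1))

/-- `a` is the family of Harish-Chandra coefficients `ν ↦ a_ν(ξ;g)`. -/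
def IsHC (g : ℂ) (ξ : Fin n → ℂ) (a : (Fin n → ℤ) → ℂ) : Prop :=
  a 0 = 1 ∧ (∀ ν, ¬ dominant ν → a ν = 0) ∧
    ∀ ν, dominant ν → ν ≠ 0 →
      a ν = (pc (zc ν - 2 • ξ) (zc ν))⁻¹ * todaRHS g a ν

/-- Term of the Harish-Chandra series: `a_ν e^{⟨ξ-ν,x⟩}`. -/
def hcTerm (a : (Fin n → ℤ) → ℂ) (ξ x : Fin n → ℂ) (ν : Fin n → ℤ) : ℂ :=
  a ν * Complex.exp (pc (ξ - zc ν) x)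

/-- The Toda + Morse potential `∑_{α ∈ S} a_α e^{-⟨α,x⟩}`. -/
def potential (n : ℕ) (g : ℂ) (x : Fin n → ℂ) : ℂ :=
  (∑ k ∈ Finset.range (n - 1), 2 * Complex.exp (- pc (zc (eZ n k - eZ n (k + 1))) x))
    + g * Complex.exp (- pc (zc (eZ n (n - 1))) x)
    + (1 / 4) * Complex.exp (- pc (zc (2 • eZ n (n - 1))) x)

/-- `∂²f/∂x_j²` evaluated at `x`. -/
def secondPartial (f : (Fin n → ℂ) → ℂ) (j : Fin n) (x : Fin n → ℂ) : ℂ :=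
  iteratedDeriv 2 (fun s => f (Function.update x j s)) (x j)

/-- `ℂⁿ_{reg,+}`. -/
def regPlus (n : ℕ) : Set (Fin n → ℂ) :=
  {ξ | (∀ j, ∀ m : ℤ, 0 < m → 2 * ξ j ≠ (m : ℂ)) ∧
    ∀ j k : Fin n, j < k → ∀ m : ℤ, 0 < m → ξ j + ξ k ≠ (m : ℂ) ∧ ξ j - ξ k ≠ (m : ℂ)}

/-- `ℂⁿ_{reg}`. -/
def regSet (n : ℕ) : Set (Fin n → ℂ) :=
  {ξ | (∀ j, ∀ m : ℤ, 2 * ξ j ≠ (m : ℂ)) ∧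
    ∀ j k : Fin n, j < k → ∀ m : ℤ, ξ j + ξ k ≠ (m : ℂ) ∧ ξ j - ξ k ≠ (m : ℂ)}

/-- `ℂⁿ_{reg,-}`. -/
def regMinus (n : ℕ) : Set (Fin n → ℂ) :=
  {ξ | (∀ j, ∀ m : ℤ, m ≤ 0 → 2 * ξ j ≠ (m : ℂ)) ∧
    ∀ j k : Fin n, j < k → ∀ m : ℤ, m ≤ 0 → ξ j + ξ k ≠ (m : ℂ) ∧ ξ j - ξ k ≠ (m : ℂ)}

/-- The condition `x_k - x_{k+1} ≥ R` for `k = 1,…,n` (with `x_{n+1} = 0`). -/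
def spaced (n : ℕ) (R : ℝ) (x : Fin n → ℝ) : Prop :=
  ∀ k : Fin n, (if h : (k : ℕ) + 1 < n then x ⟨(k : ℕ) + 1, h⟩ else 0) + R ≤ x k

/-- The Toda `c`-function `C(ξ;g)`. -/
def Cfun (g : ℂ) (ξ : Fin n → ℂ) : ℂ :=
  (∏ j, Complex.Gamma (2 * ξ j) / Complex.Gamma (1 / 2 + g + ξ j)) *
    ∏ j, ∏ k ∈ Finset.Ioi j, Complex.Gamma (ξ j + ξ k) * Complex.Gamma (ξ j - ξ k)

/-- Action of the signed permutation `(σ,ε)` on `ℂⁿ`: `(wξ)_j = ε_j ξ_{σ_j}`. -/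
def wAct (σ : Equiv.Perm (Fin n)) (ε : Fin n → Bool) (ξ : Fin n → ℂ) : Fin n → ℂ :=
  fun j => (if ε j then 1 else -1) * ξ (σ j)

/-- The hyperoctahedral Whittaker function `Φ_ξ(x;g) = ∑_{w ∈ W} C(wξ;g) φ_{wξ}(x;g)`,
built from an extension `F` of the fundamental Whittaker function. -/
def PhiOf (F : (Fin n → ℂ) → (Fin n → ℂ) → ℂ → ℂ) (g : ℂ) (ξ x : Fin n → ℂ) : ℂ :=
  ∑ σ : Equiv.Perm (Fin n), ∑ ε : Fin n → Bool,
    Cfun g (wAct σ ε ξ) * F (wAct σ ε ξ) x g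

/-- `F` is the holomorphic extension, to `ℂⁿ_{reg,+} × ℂⁿ × ℂ`, of the fundamental Whittaker
function attached to the coefficient family `a`. -/
def IsPhiExt (n : ℕ) (a : (Fin n → ℂ) → ℂ → (Fin n → ℤ) → ℂ)
    (F : (Fin n → ℂ) → (Fin n → ℂ) → ℂ → ℂ) : Prop :=
  DifferentiableOn ℂ (fun p : (Fin n → ℂ) × (Fin n → ℂ) × ℂ => F p.1 p.2.1 p.2.2)
      ((regPlus n) ×ˢ (Set.univ : Set (Fin n → ℂ)) ×ˢ (Set.univ : Set ℂ)) ∧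
    ∀ ξ ∈ Uset n ∩ regPlus n, ∀ x : Fin n → ℂ, ∀ g : ℂ,
      HasSum (fun ν : Fin n → ℤ => hcTerm (a ξ g) ξ x ν) (F ξ x g)

/-- Sign vector with value `+1` on `P`, `-1` on `M`, `0` elsewhere. -/
def es (P M : Finset (Fin n)) (j : Fin n) : ℂ :=
  if j ∈ P then 1 else if j ∈ M then -1 else 0

/-- The coefficient `V_{εJ}(ξ;g)` where `J = P ∪ M`, `ε = +1` on `P` and `-1` on `M`. -/
def Vco (g : ℂ) (ξ : Fin n → ℂ) (P M : Finset (Fin n)) : ℂ :=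
  (∏ j ∈ P ∪ M, (1 / 2 + g + es P M j * ξ j) / (2 * ξ j * (2 * ξ j + es P M j)))
    * (∏ j ∈ P ∪ M, ∏ k ∈ (P ∪ M)ᶜ, (ξ j ^ 2 - ξ k ^ 2)⁻¹)
    * ∏ j ∈ P ∪ M, ∏ j' ∈ (P ∪ M).filter (fun j' => j < j'),
        (es P M j * ξ j + es P M j' * ξ j')⁻¹ * (1 + es P M j * ξ j + es P M j' * ξ j')⁻¹

/-- The coefficient `U_{K,p}(ξ;g)`. -/
def Uco (g : ℂ) (ξ : Fin n → ℂ) (K : Finset (Fin n)) (p : ℕ) : ℂ :=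
  (-1 : ℂ) ^ (p * (p + 1) / 2) *
    ∑ P : Finset (Fin n), ∑ M : Finset (Fin n),
      if P ⊆ K ∧ M ⊆ K ∧ Disjoint P M ∧ P.card + M.card = p then
        (∏ i ∈ P ∪ M, (1 / 2 + g + es P M i * ξ i) / (2 * ξ i * (2 * ξ i + es P M i)))
          * (∏ i ∈ P ∪ M, ∏ k ∈ K \ (P ∪ M), (ξ i ^ 2 - ξ k ^ 2)⁻¹)
          * ∏ i ∈ P ∪ M, ∏ i' ∈ (P ∪ M).filter (fun i' => i < i'),
              (es P M i * ξ i + es P M i' * ξ i')⁻¹ *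
                (1 + es P M i * ξ i + es P M i' * ξ i')⁻¹
      else 0

/-- LHS of the dual difference equation of order `ℓ`, applied to a function `Φf` of the
spectral variable. -/
def diffLHS (g : ℂ) (ℓ : ℕ) (ξ : Fin n → ℂ) (Φf : (Fin n → ℂ) → ℂ) : ℂ :=
  ∑ P : Finset (Fin n), ∑ M : Finset (Fin n),
    if Disjoint P M ∧ P.card + M.card ≤ ℓ then
      Uco g ξ (P ∪ M)ᶜ (ℓ - (P.card + M.card)) * Vco g ξ P M * Φf (ξ + es P M)
    else 0

/-- The set of linear forms `ξ ↦ 2ξ_j`, `ξ ↦ ξ_j ± ξ_k` (`j < k`). -/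
def LinForms (n : ℕ) : Set ((Fin n → ℂ) → ℂ) :=
  {L | (∃ j, L = fun ξ => 2 * ξ j) ∨
    ∃ j k : Fin n, j < k ∧ ((L = fun ξ => ξ j + ξ k) ∨ L = fun ξ => ξ j - ξ k)}

/-- Exponential damping factor `e^{-c·l·⟨α,ρ⟩}`. -/
def damp (n : ℕ) (c : ℝ) (l : ℕ) (α : Fin n → ℤ) : ℂ :=
  Complex.exp (((-(c * (l : ℝ) * ((rp α : ℤ) : ℝ))) : ℝ) : ℂ)

/-- RHS of the (rescaled) Calogero–Sutherland Harish-Chandra recurrence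
`∑_{α ∈ R₊} ∑_{l ≥ 1} l e^{-c l ⟨α,ρ⟩} a^{cs}_α(k) a_{ν - lα}` (a finite sum since the
terms with `l > ⟨ν,ρ⟩` vanish). -/
def csRHS (k : ℂ × ℂ × ℂ) (c : ℝ) (a : (Fin n → ℤ) → ℂ) (ν : Fin n → ℤ) : ℂ :=
  ∑ l ∈ Finset.Icc 1 (rp ν).toNat, (l : ℂ) *
    ((∑ j : Fin n, damp n c l (eZ n (j : ℕ)) * (k.2.1 * (k.2.1 + 2 * k.2.2 - 1)) *
        a (ν - l • eZ n (j : ℕ)))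
      + (∑ j : Fin n, damp n c l (2 • eZ n (j : ℕ)) * (4 * k.2.2 * (k.2.2 - 1)) *
          a (ν - l • (2 • eZ n (j : ℕ))))
      + ∑ j : Fin n, ∑ j' ∈ Finset.Ioi j,
          (damp n c l (eZ n (j : ℕ) + eZ n (j' : ℕ)) * (2 * k.1 * (k.1 - 1)) *
              a (ν - l • (eZ n (j : ℕ) + eZ n (j' : ℕ)))
            + damp n c l (eZ n (j : ℕ) - eZ n (j' : ℕ)) * (2 * k.1 * (k.1 - 1)) *
                a (ν - l • (eZ n (j : ℕ) - eZ n (j' : ℕ)))))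

/-- `a` is the family of Calogero–Sutherland Harish-Chandra coefficients `ν ↦ a^{cs}_ν(ξ;k)`. -/
def IsHCcs (k : ℂ × ℂ × ℂ) (ξ : Fin n → ℂ) (a : (Fin n → ℤ) → ℂ) : Prop :=
  a 0 = 1 ∧ (∀ ν, ¬ dominant ν → a ν = 0) ∧
    ∀ ν, dominant ν → ν ≠ 0 → pc (zc ν - 2 • ξ) (zc ν) * a ν = csRHS k 0 a ν

/-- `a` is the family of rescaled coefficients `ν ↦ â^{cs}_ν(ξ;k)` (with damping `c` and
initial value `Δval`). -/
def IsHCcsResc (k : ℂ × ℂ × ℂ) (c : ℝ) (Δval : ℂ) (ξ : Fin n → ℂ)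
    (a : (Fin n → ℤ) → ℂ) : Prop :=
  a 0 = Δval ∧ (∀ ν, ¬ dominant ν → a ν = 0) ∧
    ∀ ν, dominant ν → ν ≠ 0 → pc (zc ν - 2 • ξ) (zc ν) * a ν = csRHS k c a ν

/-- The open Weyl chamber `𝔸ⁿ = {x ∈ ℝⁿ ∣ x₁ > x₂ > ⋯ > xₙ > 0}`. -/
def Achamber (n : ℕ) : Set (Fin n → ℝ) :=
  {x | (∀ j k : Fin n, j < k → x k < x j) ∧ ∀ j, 0 < x j}

/-- The coupling parameters `k^{(c)} = (k₀^{(c)}, 2g, k₂^{(c)})` with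
`k₀^{(c)}(k₀^{(c)}-1) = e^c`, `k₂^{(c)}(k₂^{(c)}-1) = e^{2c}/16`, `k₀^{(c)}, k₂^{(c)} > 0`. -/
def kParam (g : ℂ) (c : ℝ) : ℂ × ℂ × ℂ :=
  ((((1 + Real.sqrt (1 + 4 * Real.exp c)) / 2 : ℝ) : ℂ), 2 * g,
    (((1 + Real.sqrt (1 + Real.exp c ^ 2 / 4)) / 2 : ℝ) : ℂ))

/-- The Calogero–Sutherland `c`-function `C^{cs}(ξ;k)`. -/
def Ccs (k : ℂ × ℂ × ℂ) (ξ : Fin n → ℂ) : ℂ :=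
  (∏ j, Complex.Gamma (2 * ξ j) * Complex.Gamma (k.2.1 / 2 + ξ j) /
      (Complex.Gamma (k.2.1 + 2 * ξ j) * Complex.Gamma (k.2.1 / 2 + k.2.2 + ξ j))) *
    ∏ j, ∏ k' ∈ Finset.Ioi j,
      Complex.Gamma (ξ j + ξ k') * Complex.Gamma (ξ j - ξ k') /
        (Complex.Gamma (k.1 + ξ j + ξ k') * Complex.Gamma (k.1 + ξ j - ξ k'))

/-- The normalization constant `γ(k)`. -/
def gammaNorm (n : ℕ) (k : ℂ × ℂ × ℂ) : ℂ :=
  Complex.Gamma k.1 ^ (n * (n - 1)) *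
    (Complex.Gamma k.2.1 * Complex.Gamma (k.2.1 / 2 + k.2.2) /
      (Complex.Gamma (k.2.1 / 2) * Complex.Gamma (1 / 2 + k.2.1 / 2))) ^ n



section Helpers

lemma rp_sub (ν μ : Fin n → ℤ) : rp (ν - μ) = rp ν - rp μ := by
  simp [rp, sub_mul, Finset.sum_sub_distrib]

lemma rp_eq_sum (ν : Fin n → ℤ) : rp ν = ∑ k : Fin n, ∑ j ∈ Finset.Iic k, ν j := by
  have h1 : ∀ k : Fin n, ∑ j ∈ Finset.Iic k, ν j = ∑ j : Fin n, if j ≤ k then ν j else 0 := by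
    intro k
    rw [← Finset.sum_filter]
    congr 1
    ext j; simp
  simp_rw [h1]
  rw [Finset.sum_comm]
  unfold rp
  refine Finset.sum_congr rfl fun j _ => ?_
  have h2 : ∑ k : Fin n, (if j ≤ k then ν j else 0) = (Finset.Ici j).card • ν j := by
    rw [← Finset.sum_filter, ← Finset.sum_const]
    congr 1
    ext k; simp
  rw [h2, Fin.card_Ici, nsmul_eq_mul, Nat.cast_sub j.2.le]
  ring

lemma rp_nonneg (ν : Fin n → ℤ) (h : dominant ν) : 0 ≤ rp ν := by
  rw [rp_eq_sum]; exact Finset.sum_nonneg fun k _ => h k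

lemma eq_zero_of_rp_eq_zero (ν : Fin n → ℤ) (h : dominant ν) (h0 : rp ν = 0) : ν = 0 := by
  have h0' : ∑ k : Fin n, ∑ j ∈ Finset.Iic k, ν j = 0 := by rw [← rp_eq_sum]; exact h0
  have hall : ∀ k : Fin n, ∑ j ∈ Finset.Iic k, ν j = 0 := by
    have := (Finset.sum_eq_zero_iff_of_nonneg (fun k _ => h k)).1 h0'
    exact fun k => this k (Finset.mem_univ k)
  have H : ∀ m : ℕ, ∀ j : Fin n, (j : ℕ) = m → ν j = 0 := by
    intro m
    induction m using Nat.strong_induction_on with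
    | _ m ih =>
      intro j hj
      have hIic : Finset.Iic j = insert j (Finset.Iio j) := by
        ext k; simp [Finset.mem_Iic, Finset.mem_Iio, le_iff_lt_or_eq, or_comm]
      have hS := hall j
      rw [hIic, Finset.sum_insert (by simp)] at hS
      have hz : ∑ k ∈ Finset.Iio j, ν k = 0 := by
        apply Finset.sum_eq_zero
        intro k hk
        have hk2 : k < j := Finset.mem_Iio.1 hk
        exact ih (k : ℕ) (hj ▸ (Fin.lt_iff_val_lt_val.1 hk2)) k rfl
      simpa [hz] using hS
  funext j
  exact H (j : ℕ) j rfl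

lemma rp_eZ (k : ℕ) (hk : k < n) : rp (eZ n k) = (n : ℤ) - k := by
  unfold rp eZ
  rw [Finset.sum_eq_single ⟨k, hk⟩]
  · simp
  · intro i _ hi
    have : (i : ℕ) ≠ k := fun h => hi (Fin.ext h)
    simp [this]
  · simp

lemma rp_zero : rp (0 : Fin n → ℤ) = 0 := by simp [rp]

end Helpers

set_option maxHeartbeats 1600000 in
/-- Growth estimate for the Harish-Chandra coefficients:
`|a_ν(ξ;g)| ≤ A^{⟨ν,ρ⟩}/⟨ν,ρ⟩!` with `A = 1 + cn/a`. -/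
theorem statement11 (n : ℕ) (hn : 1 ≤ n) (g : ℂ)
    (ξ : Fin n → ℂ) (hξ : ξ ∈ Uset n)
    (aCo : (Fin n → ℤ) → ℂ) (haCo : IsHC g ξ aCo)
    (aC : ℝ) (haC : 0 < aC)
    (hbound : ∀ ν : Fin n → ℤ, dominant ν → ν ≠ 0 →
      aC * ((rp ν : ℝ)) ^ 2 ≤ ‖pc (zc ν - 2 • ξ) (zc ν)‖)
    (c : ℝ) (hc : 0 < c) (hc2 : 1 < n → (2 : ℝ) ≤ c) (hcg : ‖g‖ ≤ c)
    (hc4 : (1 / 4 : ℝ) ≤ c) :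
    ∀ ν : Fin n → ℤ, dominant ν →
      ‖aCo ν‖ ≤ (1 + c * n / aC) ^ ((rp ν).toNat) / (Nat.factorial (rp ν).toNat : ℝ) := by
  -- main proof
  set A : ℝ := 1 + c * n / aC with hAdef
  have hApos : (0:ℝ) < A := by rw [hAdef]; positivity
  have hA1 : (1:ℝ) ≤ A := by
    rw [hAdef]
    have : 0 < c * n / aC := by positivity
    linarith
  clear_value A
  obtain ⟨ha0, hanz, hrec⟩ := haCo
  suffices H : ∀ m : ℕ, ∀ ν : Fin n → ℤ, dominant ν → (rp ν).toNat = m →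
      ‖aCo ν‖ ≤ A ^ m / (Nat.factorial m : ℝ) by
    intro ν hdom; exact H _ ν hdom rfl
  intro m
  induction m using Nat.strong_induction_on with
  | _ m ih =>
    intro ν hdom hm
    by_cases hν : ν = 0
    · subst hν
      have : rp (0 : Fin n → ℤ) = 0 := rp_zero
      rw [this] at hm
      simp only [Int.toNat_zero] at hm
      subst hm
      rw [ha0]
      simp
    -- inductive step
    · have hrp0 : 0 ≤ rp ν := rp_nonneg ν hdom
      have hrpm : rp ν = (m : ℤ) := by omega
      have hm1 : 1 ≤ m := by
        rcases Nat.eq_zero_or_pos m with h | h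
        · exfalso; apply hν; apply eq_zero_of_rp_eq_zero ν hdom; omega
        · exact h
      -- per-term bounds
      have hterm1 : ∀ α : Fin n → ℤ, rp α = 1 →
          ‖aCo (ν - α)‖ ≤ A ^ (m - 1) / (Nat.factorial (m - 1) : ℝ) := by
        intro α hα
        by_cases hd : dominant (ν - α)
        · have h2 : rp (ν - α) = (m : ℤ) - 1 := by rw [rp_sub, hα, hrpm]
          have h3 : (rp (ν - α)).toNat = m - 1 := by omega
          exact ih (m - 1) (by omega) _ hd h3
        · rw [hanz _ hd, norm_zero]; positivity
      have hterm2 : ‖aCo (ν - 2 • eZ n (n - 1))‖ ≤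
          (if 2 ≤ m then A ^ (m - 2) / (Nat.factorial (m - 2) : ℝ) else 0) := by
        have hrpe : rp (2 • eZ n (n - 1)) = 2 := by
          have h1 : rp (eZ n (n - 1)) = 1 := by
            rw [rp_eZ (n - 1) (by omega)]; omega
          have : (2 • eZ n (n - 1) : Fin n → ℤ) = eZ n (n-1) + eZ n (n-1) := two_smul _ _
          rw [this]
          have : rp (eZ n (n-1) + eZ n (n-1)) = rp (eZ n (n-1)) + rp (eZ n (n-1)) := by
            simp [rp, add_mul, Finset.sum_add_distrib]
          rw [this, h1]; norm_num
        by_cases hd : dominant (ν - 2 • eZ n (n - 1))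
        · have h2 : rp (ν - 2 • eZ n (n-1)) = (m : ℤ) - 2 := by rw [rp_sub, hrpe, hrpm]
          have hm2 : 2 ≤ m := by
            have := rp_nonneg _ hd; omega
          rw [if_pos hm2]
          have h3 : (rp (ν - 2 • eZ n (n-1))).toNat = m - 2 := by omega
          exact ih (m - 2) (by omega) _ hd h3
        · rw [hanz _ hd, norm_zero]
          split
          · positivity
          · exact le_refl _
      -- norms and recursion
      set B1 : ℝ := A ^ (m - 1) / (Nat.factorial (m - 1) : ℝ) with hB1def
      set T2 : ℝ := (if 2 ≤ m then A ^ (m - 2) / (Nat.factorial (m - 2) : ℝ) else 0) with hT2def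
      clear_value B1 T2
      have hB1nn : 0 ≤ B1 := by rw [hB1def]; positivity
      have hT2nn : 0 ≤ T2 := by rw [hT2def]; split <;> positivity
      have hpc : aC * (m : ℝ) ^ 2 ≤ ‖pc (zc ν - 2 • ξ) (zc ν)‖ := by
        have := hbound ν hdom hν
        rwa [hrpm] at this
      have hmpos : (0:ℝ) < aC * (m : ℝ) ^ 2 := by
        have : (0:ℝ) < (m:ℝ) := by exact_mod_cast hm1
        positivity
      have hpcpos : 0 < ‖pc (zc ν - 2 • ξ) (zc ν)‖ := lt_of_lt_of_le hmpos hpc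
      -- bound the RHS
      have hsum : ‖∑ k ∈ Finset.range (n - 1), 2 * aCo (ν - (eZ n k - eZ n (k + 1)))‖ ≤
          ((n - 1 : ℕ) : ℝ) * (c * B1) := by
        calc ‖∑ k ∈ Finset.range (n - 1), 2 * aCo (ν - (eZ n k - eZ n (k + 1)))‖
            ≤ ∑ k ∈ Finset.range (n - 1), ‖2 * aCo (ν - (eZ n k - eZ n (k + 1)))‖ :=
              norm_sum_le _ _
          _ ≤ ∑ k ∈ Finset.range (n - 1), c * B1 := by
              apply Finset.sum_le_sum
              intro k hk
              have hk' : k < n - 1 := Finset.mem_range.1 hk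
              have hn2 : 1 < n := by omega
              have hc2' : (2:ℝ) ≤ c := hc2 hn2
              have hα : rp (eZ n k - eZ n (k+1)) = 1 := by
                rw [rp_sub, rp_eZ k (by omega), rp_eZ (k+1) (by omega)]
                push_cast; ring
              have hb := hterm1 _ hα
              rw [norm_mul]
              have h2n : ‖(2:ℂ)‖ = 2 := by norm_num
              rw [h2n]
              exact mul_le_mul hc2' hb (norm_nonneg _) (le_of_lt hc)
          _ = ((n - 1 : ℕ) : ℝ) * (c * B1) := by
              rw [Finset.sum_const, Finset.card_range, nsmul_eq_mul]
      have hg : ‖g * aCo (ν - eZ n (n - 1))‖ ≤ c * B1 := by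
        rw [norm_mul]
        have hα : rp (eZ n (n-1)) = 1 := by rw [rp_eZ (n-1) (by omega)]; omega
        exact mul_le_mul hcg (hterm1 _ hα) (norm_nonneg _) (le_of_lt hc)
      have hq : ‖(1/4 : ℂ) * aCo (ν - 2 • eZ n (n - 1))‖ ≤ c * T2 := by
        rw [norm_mul]
        have h14 : ‖(1/4 : ℂ)‖ = 1/4 := by norm_num
        rw [h14]
        exact mul_le_mul hc4 hterm2 (norm_nonneg _) (le_of_lt hc)
      have hRHS : ‖todaRHS g aCo ν‖ ≤ ((n - 1 : ℕ) : ℝ) * (c * B1) + c * B1 + c * T2 := by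
        unfold todaRHS
        calc ‖(∑ k ∈ Finset.range (n - 1), 2 * aCo (ν - (eZ n k - eZ n (k + 1))))
              + g * aCo (ν - eZ n (n - 1)) + (1/4 : ℂ) * aCo (ν - 2 • eZ n (n - 1))‖
            ≤ ‖(∑ k ∈ Finset.range (n - 1), 2 * aCo (ν - (eZ n k - eZ n (k + 1))))
              + g * aCo (ν - eZ n (n - 1))‖ + ‖(1/4 : ℂ) * aCo (ν - 2 • eZ n (n - 1))‖ :=
              norm_add_le _ _
          _ ≤ (‖∑ k ∈ Finset.range (n - 1), 2 * aCo (ν - (eZ n k - eZ n (k + 1)))‖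
              + ‖g * aCo (ν - eZ n (n - 1))‖) + ‖(1/4 : ℂ) * aCo (ν - 2 • eZ n (n - 1))‖ := by
              gcongr
              exact norm_add_le _ _
          _ ≤ ((n - 1 : ℕ) : ℝ) * (c * B1) + c * B1 + c * T2 := by
              gcongr
      -- assemble
      have hstep : ‖aCo ν‖ ≤ (aC * (m : ℝ) ^ 2)⁻¹ *
          (((n - 1 : ℕ) : ℝ) * (c * B1) + c * B1 + c * T2) := by
        rw [hrec ν hdom hν, norm_mul, norm_inv]
        apply mul_le_mul (inv_anti₀ hmpos hpc) hRHS (norm_nonneg _)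
        positivity
      refine le_trans hstep ?_
      -- final arithmetic
      have hXle : ((n - 1 : ℕ) : ℝ) * (c * B1) + c * B1 + c * T2 ≤
          aC * (m : ℝ) ^ 2 * (A ^ m / (Nat.factorial m : ℝ)) := by
        have hcn1 : ((n - 1 : ℕ) : ℝ) = (n : ℝ) - 1 := by
          rw [Nat.cast_sub hn]; norm_num
        rcases Nat.lt_or_ge m 2 with hm2 | hm2
        · -- m = 1
          have hmeq : m = 1 := by omega
          subst hmeq
          rw [hT2def, if_neg (by omega)]
          rw [hB1def]
          simp only [Nat.sub_self, pow_zero, Nat.factorial_zero, Nat.cast_one, div_one,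
            Nat.factorial_one, pow_one]
          rw [hcn1, hAdef]
          have hn1 : (1:ℝ) ≤ (n:ℝ) := by exact_mod_cast hn
          have h1 : ((n:ℝ) - 1) * (c * 1) + c * 1 + c * 0 = c * n := by ring
          rw [h1]
          have haC' : aC ≠ 0 := ne_of_gt haC
          have h2 : aC * (1:ℝ) ^ 2 * (1 + c * (n:ℝ) / aC) = aC + c * n := by
            field_simp
          linarith [h2]
        · -- m = k + 2
          obtain ⟨k, rfl⟩ : ∃ k, m = k + 2 := ⟨m - 2, by omega⟩
          rw [hT2def, if_pos (by omega), hB1def]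
          have hs1 : k + 2 - 1 = k + 1 := by omega
          have hs2 : k + 2 - 2 = k := by omega
          rw [hs1, hs2]
          have hFk : (0:ℝ) < (Nat.factorial k : ℝ) := by
            exact_mod_cast Nat.factorial_pos k
          have key : c * (n:ℝ) * A + c * ((k:ℝ) + 1) ≤ aC * ((k:ℝ) + 2) * A ^ 2 := by
            have haC' : aC ≠ 0 := ne_of_gt haC
            have hAeq : aC * A = aC + c * n := by
              rw [hAdef]; field_simp
            have hn1 : (1:ℝ) ≤ (n:ℝ) := by exact_mod_cast hn
            have hk0 : (0:ℝ) ≤ (k:ℝ) := Nat.cast_nonneg k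
            have hnA : (1:ℝ) ≤ (n:ℝ) * A := by
              nlinarith [mul_nonneg (sub_nonneg.2 hn1) (sub_nonneg.2 hA1)]
            have f1 : (0:ℝ) ≤ ((k:ℝ) + 1) * (c * ((n:ℝ) * A - 1)) := by
              have : (0:ℝ) ≤ c * ((n:ℝ) * A - 1) :=
                mul_nonneg hc.le (sub_nonneg.2 hnA)
              positivity
            have f2 : (0:ℝ) < ((k:ℝ) + 2) * (aC * A) := by positivity
            have h3 : aC * ((k:ℝ) + 2) * A ^ 2 = ((k:ℝ) + 2) * ((aC + c * n) * A) := by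
              rw [← hAeq]; ring
            rw [h3]
            linarith [f1, f2]
          have e1 : ((n - 1 : ℕ) : ℝ) * (c * (A ^ (k+1) / (Nat.factorial (k+1) : ℝ)))
              + c * (A ^ (k+1) / (Nat.factorial (k+1) : ℝ))
              + c * (A ^ k / (Nat.factorial k : ℝ))
              = (c * (n:ℝ) * A + c * ((k:ℝ) + 1)) * (A ^ k / (Nat.factorial (k+1) : ℝ)) := by
            have hFk' : (Nat.factorial k : ℝ) ≠ 0 := ne_of_gt hFk
            have hk1 : ((k:ℝ) + 1) ≠ 0 := by positivity
            rw [hcn1, Nat.factorial_succ k, pow_succ]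
            push_cast
            field_simp
            ring
          have e2 : aC * ((k + 2 : ℕ) : ℝ) ^ 2 * (A ^ (k+2) / (Nat.factorial (k+2) : ℝ))
              = (aC * ((k:ℝ) + 2) * A ^ 2) * (A ^ k / (Nat.factorial (k+1) : ℝ)) := by
            have hF1 : (Nat.factorial (k+1) : ℝ) ≠ 0 := by
              have := Nat.factorial_pos (k+1)
              positivity
            have hk2' : ((k:ℝ) + 1 + 1) ≠ 0 := by positivity
            rw [Nat.factorial_succ (k+1)]
            have hpow : A ^ (k+2) = A ^ k * A ^ 2 := by rw [← pow_add]
            rw [hpow]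
            push_cast
            field_simp
            ring
          rw [e1, e2]
          apply mul_le_mul_of_nonneg_right key
          positivity
      calc (aC * (m : ℝ) ^ 2)⁻¹ * (((n - 1 : ℕ) : ℝ) * (c * B1) + c * B1 + c * T2)
          ≤ (aC * (m : ℝ) ^ 2)⁻¹ * (aC * (m : ℝ) ^ 2 * (A ^ m / (Nat.factorial m : ℝ))) := by
            apply mul_le_mul_of_nonneg_left hXle
            positivity
        _ = A ^ m / (Nat.factorial m : ℝ) := by
            rw [← mul_assoc, inv_mul_cancel₀ (ne_of_gt hmpos), one_mul]


end TodaBC
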